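/- arXiv:1710.01145 — 7 statements merged into one kernel-verified Lean document; each statement's English description precedes it below -/
import Mathlib

section
/- Any regular hull H of a degenerate subspace W with radical I is isometric to the orthogonal direct sum (I ⊕ I*) ⊕ G, where G is a maximal nondegenerate subspace of W and I ⊕ I* carries its canonical neutral hyperbolic pairing; in particular, the hull of a φ-invariant degenerate subspace has neutral signature (k+l, k+l) where k = dim I and G has signature (l, l). -/
/-!
Maximality of `G` forces every vector of `W` orthogonal to `G` to be isotropic, so `W ∩ G^⊥` is
totally isotropic, hence equal to the radical `I`, and `W = I ⊕ G`. Regularity of `H` makes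
`x ↦ g x |_I` map `H` onto `I*`; a linear section of this map, corrected first by the projection
onto `G^⊥` and then by half of its own Gram form (read as a vector of `I ≅ I**`), is an isotropic
`B : I* → H ∩ G^⊥` with `g (B ξ) v = ξ v`. Then `(v, ξ, p) ↦ v + B ξ + p` is an isometry from
`(I ⊕ I*) ⊕ G` whose image is regular and contains `W`, so it is all of `H` by minimality.

An anti-isometric involution `φ` preserving `W` preserves `I`, and `G` splits into the vectors
that `φ` fixes, resp. negates, modulo `I`. Both parts are totally isotropic, so regularity of `G`
gives them the same dimension `l`, and `I` plus the first part is a totally isotropic subspace of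
`H` of dimension `k + l`.
-/

namespace LinearMap.BilinForm

open Module

variable {K V : Type*} [Field K] [AddCommGroup V] [Module K V]

def IsRegularOn (g : LinearMap.BilinForm K V) (U : Submodule K V) : Prop :=
  ∀ x ∈ U, (∀ y ∈ U, g x y = 0) → x = 0

def IsTotallyIsotropicOn (g : LinearMap.BilinForm K V) (U : Submodule K V) : Prop :=
  ∀ x ∈ U, ∀ y ∈ U, g x y = 0

variable {g : LinearMap.BilinForm K V}

theorem IsRegularOn.nondegenerate_restrict (hsymm : ∀ x y, g x y = g y x) {U : Submodule K V}
    (hU : g.IsRegularOn U) : (g.restrict U).Nondegenerate :=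
  ⟨fun x hx => Subtype.ext (hU x x.2 fun y hy => hx ⟨y, hy⟩),
    fun x hx => Subtype.ext (hU x x.2 fun y hy => hsymm x y ▸ hx ⟨y, hy⟩)⟩

theorem IsRegularOn.isCompl_orthogonal [FiniteDimensional K V] (hsymm : ∀ x y, g x y = g y x)
    {G : Submodule K V} (hG : g.IsRegularOn G) : IsCompl G (g.orthogonal G) :=
  isCompl_orthogonal_of_restrict_nondegenerate (fun x y h => hsymm x y ▸ h)
    (hG.nondegenerate_restrict hsymm)

theorem IsRegularOn.sup_span_singleton {G : Submodule K V}
    (hG : g.IsRegularOn G) {u : V} (huG : u ∈ g.orthogonal G) (hu : g u u ≠ 0) :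
    g.IsRegularOn (G ⊔ K ∙ u) := by
  intro x hx hperp
  obtain ⟨y, hy, _, hz, rfl⟩ := Submodule.mem_sup.mp hx
  obtain ⟨t, rfl⟩ := Submodule.mem_span_singleton.mp hz
  have ht : t = 0 := by
    have h := hperp u (Submodule.mem_sup_right (Submodule.mem_span_singleton_self u))
    rw [map_add, LinearMap.add_apply, huG y hy, zero_add, map_smul,
      LinearMap.smul_apply, smul_eq_mul] at h
    exact (mul_eq_zero.mp h).resolve_right hu
  subst ht
  rw [zero_smul, add_zero] at hperp ⊢
  exact hG y hy fun y' hy' => hperp y' (Submodule.mem_sup_left hy')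

theorem isTotallyIsotropicOn_of_apply_self [NeZero (2 : K)] (hsymm : ∀ x y, g x y = g y x)
    {U : Submodule K V} (h : ∀ x ∈ U, g x x = 0) : g.IsTotallyIsotropicOn U := by
  intro x hx y hy
  have hxy := h (x + y) (U.add_mem hx hy)
  simp only [map_add, LinearMap.add_apply, h x hx, h y hy, hsymm y x] at hxy
  have : (2 : K) * g x y = 0 := by linear_combination hxy
  exact (mul_eq_zero.mp this).resolve_left two_ne_zero

theorem IsTotallyIsotropicOn.sup (hsymm : ∀ x y, g x y = g y x) {A B : Submodule K V}
    (hA : g.IsTotallyIsotropicOn A) (hB : g.IsTotallyIsotropicOn B) (hAB : B ≤ g.orthogonal A) :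
    g.IsTotallyIsotropicOn (A ⊔ B) := by
  intro x hx y hy
  obtain ⟨a, ha, b, hb, rfl⟩ := Submodule.mem_sup.mp hx
  obtain ⟨a', ha', b', hb', rfl⟩ := Submodule.mem_sup.mp hy
  simp only [map_add, LinearMap.add_apply, hA a ha a' ha', hB b hb b' hb', hAB hb' a ha,
    hsymm b a', hAB hb a' ha', add_zero]

theorem isTotallyIsotropicOn_inf_orthogonal_of_maximal [NeZero (2 : K)]
    (hsymm : ∀ x y, g x y = g y x) {W G : Submodule K V} (hG : g.IsRegularOn G) (hGW : G ≤ W)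
    (hGmax : ∀ G' : Submodule K V, G ≤ G' → G' ≤ W → g.IsRegularOn G' → G' = G) :
    g.IsTotallyIsotropicOn (W ⊓ g.orthogonal G) := by
  refine isTotallyIsotropicOn_of_apply_self hsymm fun u hu => ?_
  obtain ⟨huW, huG⟩ := Submodule.mem_inf.mp hu
  by_contra hne
  have hsup : G ⊔ K ∙ u = G :=
    hGmax _ le_sup_left (sup_le hGW ((Submodule.span_singleton_le_iff_mem u W).mpr huW))
      (hG.sup_span_singleton huG hne)
  have hu' : u ∈ G := hsup ▸ Submodule.mem_sup_right (Submodule.mem_span_singleton_self u)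
  exact hne (huG u hu')

theorem radical_sup_eq_of_maximal [FiniteDimensional K V] [NeZero (2 : K)]
    (hsymm : ∀ x y, g x y = g y x) {W I G : Submodule K V}
    (hI : ∀ v, v ∈ I ↔ v ∈ W ∧ ∀ w ∈ W, g v w = 0) (hG : g.IsRegularOn G) (hGW : G ≤ W)
    (hGmax : ∀ G' : Submodule K V, G ≤ G' → G' ≤ W → g.IsRegularOn G' → G' = G) :
    I ⊔ G = W := by
  have hW : G ⊔ W ⊓ g.orthogonal G = W := by
    rw [inf_comm, ← sup_inf_assoc_of_le _ hGW, (hG.isCompl_orthogonal hsymm).sup_eq_top,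
      top_inf_eq]
  have hiso := isTotallyIsotropicOn_inf_orthogonal_of_maximal hsymm hG hGW hGmax
  have hle : W ⊓ g.orthogonal G ≤ I := by
    intro u hu
    refine (hI u).mpr ⟨(Submodule.mem_inf.mp hu).1, fun w hw => ?_⟩
    rw [← hW] at hw
    obtain ⟨p, hp, q, hq, rfl⟩ := Submodule.mem_sup.mp hw
    rw [map_add, hsymm u p, (Submodule.mem_inf.mp hu).2 p hp, hiso u hu q hq, add_zero]
  refine le_antisymm (sup_le (fun v hv => ((hI v).mp hv).1) hGW) ?_
  conv_lhs => rw [← hW]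
  exact sup_comm I G ▸ sup_le_sup_left hle G

theorem exists_dualLift [FiniteDimensional K V] (hsymm : ∀ x y, g x y = g y x)
    {H I : Submodule K V} (hH : g.IsRegularOn H) (hIH : I ≤ H) :
    ∃ B : Dual K I →ₗ[K] V, (∀ ξ, B ξ ∈ H) ∧ ∀ ξ (v : I), g (B ξ) v = ξ v := by
  let R : H →ₗ[K] Dual K I := (Submodule.inclusion hIH).dualMap ∘ₗ
    ((g.restrict H).toDual (hH.nondegenerate_restrict hsymm)).toLinearMap
  have hR : Function.Surjective R :=
    (dualMap_surjective_of_injective (Submodule.inclusion_injective hIH)).comp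
      (LinearEquiv.surjective _)
  obtain ⟨S, hS⟩ := R.exists_rightInverse_of_surjective (range_eq_top.mpr hR)
  exact ⟨H.subtype ∘ₗ S, fun ξ => (S ξ).2, fun ξ v => congr($hS ξ v)⟩

theorem exists_dualLift_orthogonal [FiniteDimensional K V] (hsymm : ∀ x y, g x y = g y x)
    {H I G : Submodule K V} (hG : g.IsRegularOn G) (hGH : G ≤ H) (hIG : I ≤ g.orthogonal G)
    {B : Dual K I →ₗ[K] V} (hBH : ∀ ξ, B ξ ∈ H) (hBI : ∀ ξ (v : I), g (B ξ) v = ξ v) :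
    ∃ B' : Dual K I →ₗ[K] V, (∀ ξ, B' ξ ∈ H) ∧ (∀ ξ (v : I), g (B' ξ) v = ξ v) ∧
      ∀ ξ, B' ξ ∈ g.orthogonal G := by
  have hc := hG.isCompl_orthogonal hsymm
  refine ⟨B - G.projection _ hc ∘ₗ B,
    fun ξ => H.sub_mem (hBH ξ) (hGH (Submodule.projection_apply_mem hc _)), fun ξ v => ?_,
    fun ξ => Submodule.sub_projection_mem hc (B ξ)⟩
  rw [LinearMap.sub_apply, map_sub, LinearMap.sub_apply, hBI, LinearMap.comp_apply,
    hIG v.2 _ (Submodule.projection_apply_mem hc _), sub_zero]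

structure IsIsotropicDualLift (g : LinearMap.BilinForm K V) (H I G : Submodule K V)
    (B : Dual K I →ₗ[K] V) : Prop where
  mem : ∀ ξ, B ξ ∈ H
  apply_coe : ∀ ξ (v : I), g (B ξ) v = ξ v
  mem_orthogonal : ∀ ξ, B ξ ∈ g.orthogonal G
  apply_apply_eq_zero : ∀ ξ η, g (B ξ) (B η) = 0

theorem exists_isIsotropicDualLift_of_dualLift [FiniteDimensional K V] [NeZero (2 : K)]
    (hsymm : ∀ x y, g x y = g y x) {H I G : Submodule K V} (hIH : I ≤ H)
    (hI : g.IsTotallyIsotropicOn I) (hIG : I ≤ g.orthogonal G) {B : Dual K I →ₗ[K] V}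
    (hBH : ∀ ξ, B ξ ∈ H) (hBI : ∀ ξ (v : I), g (B ξ) v = ξ v)
    (hBG : ∀ ξ, B ξ ∈ g.orthogonal G) :
    ∃ B', IsIsotropicDualLift g H I G B' := by
  let s : Dual K I →ₗ[K] I := (evalEquiv K I).symm.toLinearMap ∘ₗ g.compl₁₂ B B
  have hs : ∀ ξ η, η (s ξ) = g (B ξ) (B η) := fun ξ η => apply_evalEquiv_symm_apply K I η _
  have hsB : ∀ ξ η, g (s ξ) (B η) = g (B ξ) (B η) := fun ξ η => by rw [hsymm, hBI, hs]
  have hss : ∀ ξ η, g (s ξ) (s η) = 0 := fun ξ η => hI _ (s ξ).2 _ (s η).2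
  refine ⟨B - (2⁻¹ : K) • I.subtype ∘ₗ s,
    ⟨fun ξ => ?_, fun ξ v => ?_, fun ξ => ?_, fun ξ η => ?_⟩⟩
  · exact H.sub_mem (hBH ξ) (H.smul_mem _ (hIH (s ξ).2))
  · simp [hBI, hI _ (s ξ).2 _ v.2]
  · exact Submodule.sub_mem _ (hBG ξ) (Submodule.smul_mem _ _ (hIG (s ξ).2))
  · simp only [LinearMap.sub_apply, LinearMap.smul_apply, LinearMap.comp_apply,
      Submodule.subtype_apply, map_sub, map_smul, smul_eq_mul, hsB, hss]
    rw [hsymm (B ξ) (s η), hsB, hsymm (B η)]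
    field_simp
    ring

theorem exists_isIsotropicDualLift [FiniteDimensional K V] [NeZero (2 : K)]
    (hsymm : ∀ x y, g x y = g y x) {H I G : Submodule K V} (hH : g.IsRegularOn H)
    (hG : g.IsRegularOn G) (hIH : I ≤ H) (hGH : G ≤ H) (hI : g.IsTotallyIsotropicOn I)
    (hIG : I ≤ g.orthogonal G) :
    ∃ B, IsIsotropicDualLift g H I G B := by
  obtain ⟨B₀, hB₀H, hB₀I⟩ := exists_dualLift hsymm hH hIH
  obtain ⟨B₁, hB₁H, hB₁I, hB₁G⟩ := exists_dualLift_orthogonal hsymm hG hGH hIG hB₀H hB₀I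
  exact exists_isIsotropicDualLift_of_dualLift hsymm hIH hI hIG hB₁H hB₁I hB₁G

theorem eq_zero_of_forall_hyperbolic_add_eq_zero {M : Type*} [AddCommGroup M] [Module K M]
    {G : Submodule K V} (hG : g.IsRegularOn G) {z : (M × Dual K M) × G}
    (h : ∀ z' : (M × Dual K M) × G, z.1.2 z'.1.1 + z'.1.2 z.1.1 + g z.2 z'.2 = 0) : z = 0 := by
  obtain ⟨⟨v, ξ⟩, p⟩ := z
  have hξ : ξ = 0 := LinearMap.ext fun v' => by simpa using h ((v', 0), 0)
  have hv : v = 0 := (forall_dual_apply_eq_zero_iff K v).mp fun η => by simpa using h ((0, η), 0)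
  have hp : p = 0 := Subtype.ext (hG p p.2 fun y hy => by simpa using h ((0, 0), ⟨y, hy⟩))
  simp [hξ, hv, hp]

def hullMap {I : Submodule K V} (G : Submodule K V) (B : Dual K I →ₗ[K] V) :
    (I × Dual K I) × G →ₗ[K] V :=
  (I.subtype.coprod B).coprod G.subtype

@[simp]
theorem hullMap_apply {I : Submodule K V} (G : Submodule K V) (B : Dual K I →ₗ[K] V)
    (z : (I × Dual K I) × G) : hullMap G B z = z.1.1 + B z.1.2 + z.2 :=
  rfl

namespace IsIsotropicDualLift

variable {H I G : Submodule K V} {B : Dual K I →ₗ[K] V}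

theorem apply_hullMap (hsymm : ∀ x y, g x y = g y x) (hI : g.IsTotallyIsotropicOn I)
    (hIG : I ≤ g.orthogonal G) (hB : IsIsotropicDualLift g H I G B)
    (z z' : (I × Dual K I) × G) :
    g (hullMap G B z) (hullMap G B z') = z.1.2 z'.1.1 + z'.1.2 z.1.1 + g z.2 z'.2 := by
  obtain ⟨⟨v, ξ⟩, p⟩ := z
  obtain ⟨⟨v', ξ'⟩, p'⟩ := z'
  simp only [hullMap_apply, map_add, LinearMap.add_apply, hI v v.2 v' v'.2, hB.apply_coe,
    hB.apply_apply_eq_zero, hIG v'.2 p p.2, hB.mem_orthogonal ξ' p p.2, hsymm (v : V) (B ξ'),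
    hsymm (v : V) (p' : V), hIG v.2 p' p'.2, hsymm (B ξ) (p' : V), hB.mem_orthogonal ξ p' p'.2]
  ring

theorem eq_zero_of_forall_apply_hullMap_eq_zero (hsymm : ∀ x y, g x y = g y x)
    (hI : g.IsTotallyIsotropicOn I) (hIG : I ≤ g.orthogonal G) (hG : g.IsRegularOn G)
    (hB : IsIsotropicDualLift g H I G B) {z : (I × Dual K I) × G}
    (h : ∀ z', g (hullMap G B z) (hullMap G B z') = 0) : z = 0 :=
  eq_zero_of_forall_hyperbolic_add_eq_zero hG fun z' => hB.apply_hullMap hsymm hI hIG z z' ▸ h z'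

theorem injective_hullMap (hsymm : ∀ x y, g x y = g y x) (hI : g.IsTotallyIsotropicOn I)
    (hIG : I ≤ g.orthogonal G) (hG : g.IsRegularOn G) (hB : IsIsotropicDualLift g H I G B) :
    Function.Injective (hullMap G B) :=
  (injective_iff_map_eq_zero _).mpr fun _ hz =>
    hB.eq_zero_of_forall_apply_hullMap_eq_zero hsymm hI hIG hG fun _ => by
      rw [hz, map_zero, LinearMap.zero_apply]

theorem isRegularOn_range_hullMap (hsymm : ∀ x y, g x y = g y x)
    (hI : g.IsTotallyIsotropicOn I)
    (hIG : I ≤ g.orthogonal G) (hG : g.IsRegularOn G) (hB : IsIsotropicDualLift g H I G B) :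
    g.IsRegularOn (range (hullMap G B)) := by
  rintro _ ⟨z, rfl⟩ h
  rw [hB.eq_zero_of_forall_apply_hullMap_eq_zero hsymm hI hIG hG fun z' => h _ ⟨z', rfl⟩,
    map_zero]

theorem range_hullMap_eq (hsymm : ∀ x y, g x y = g y x) (hI : g.IsTotallyIsotropicOn I)
    (hIG : I ≤ g.orthogonal G) (hG : g.IsRegularOn G) (hB : IsIsotropicDualLift g H I G B)
    {W : Submodule K V} (hWIG : I ⊔ G = W) (hWH : W ≤ H)
    (hHmin : ∀ H' : Submodule K V, W ≤ H' → H' ≤ H → g.IsRegularOn H' → H' = H) :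
    range (hullMap G B) = H := by
  refine hHmin _ ?_ ?_ (hB.isRegularOn_range_hullMap hsymm hI hIG hG)
  · rw [← hWIG]
    exact sup_le (fun v hv => ⟨((⟨v, hv⟩, 0), 0), by simp⟩)
      fun p hp => ⟨((0, 0), ⟨p, hp⟩), by simp⟩
  · rintro _ ⟨⟨⟨v, ξ⟩, p⟩, rfl⟩
    rw [← hWIG] at hWH
    exact H.add_mem (H.add_mem (le_sup_left.trans hWH v.2) (hB.mem ξ))
      (le_sup_right.trans hWH p.2)

end IsIsotropicDualLift

theorem exists_linearEquiv_hyperbolic_prod_of_minimal [FiniteDimensional K V] [NeZero (2 : K)]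
    (hsymm : ∀ x y, g x y = g y x) {W H I G : Submodule K V} (hIW : I ≤ W)
    (hIperp : I ≤ g.orthogonal W) (hG : g.IsRegularOn G) (hWIG : I ⊔ G = W) (hWH : W ≤ H)
    (hH : g.IsRegularOn H)
    (hHmin : ∀ H' : Submodule K V, W ≤ H' → H' ≤ H → g.IsRegularOn H' → H' = H) :
    ∃ e : H ≃ₗ[K] (I × Dual K I) × G, ∀ x y : H,
      g x y = (e x).1.2 (e y).1.1 + (e y).1.2 (e x).1.1 + g (e x).2 (e y).2 := by
  have hI : g.IsTotallyIsotropicOn I := fun x hx y hy => hIperp hy x (hIW hx)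
  have hIG : I ≤ g.orthogonal G := hIperp.trans (orthogonal_le (hWIG ▸ le_sup_right))
  obtain ⟨B, hB⟩ := exists_isIsotropicDualLift hsymm hH hG (hIW.trans hWH)
    ((hWIG ▸ le_sup_right : G ≤ W).trans hWH) hI hIG
  let e := (LinearEquiv.ofInjective _ (hB.injective_hullMap hsymm hI hIG hG)).trans
    (LinearEquiv.ofEq _ _ (hB.range_hullMap_eq hsymm hI hIG hG hWIG hWH hHmin))
  refine ⟨e.symm, fun x y => ?_⟩
  obtain ⟨z, rfl⟩ := e.surjective x
  obtain ⟨z', rfl⟩ := e.surjective y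
  rw [e.symm_apply_apply, e.symm_apply_apply]
  exact hB.apply_hullMap hsymm hI hIG z z'

theorem IsRegularOn.inf_eq_bot_of_le_orthogonal (hsymm : ∀ x y, g x y = g y x)
    {I G : Submodule K V} (hG : g.IsRegularOn G) (hIG : I ≤ g.orthogonal G) : I ⊓ G = ⊥ :=
  eq_bot_iff.mpr fun x hx =>
    hG x (Submodule.mem_inf.mp hx).2 fun y hy =>
      hsymm x y ▸ hIG (Submodule.mem_inf.mp hx).1 y hy

theorem IsRegularOn.finrank_le_of_sup_eq {G A B : Submodule K V} (hG : g.IsRegularOn G)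
    (hAB : A ⊔ B = G) (hA : g.IsTotallyIsotropicOn A) [FiniteDimensional K B] :
    finrank K A ≤ finrank K B := by
  have hinj : Function.Injective (g.domRestrict₁₂ A B) := by
    refine (injective_iff_map_eq_zero _).mpr fun a ha => Subtype.ext ?_
    refine hG a (hAB ▸ Submodule.mem_sup_left a.2) fun y hy => ?_
    rw [← hAB] at hy
    obtain ⟨u, hu, v, hv, rfl⟩ := Submodule.mem_sup.mp hy
    rw [map_add, hA a a.2 u hu, zero_add]
    exact congr($ha ⟨v, hv⟩)
  calc finrank K A ≤ finrank K (Dual K B) := LinearMap.finrank_le_finrank_of_injective hinj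
    _ = finrank K B := Subspace.dual_finrank_eq

theorem IsRegularOn.finrank_eq_two_mul [FiniteDimensional K V] {G A B : Submodule K V}
    (hG : g.IsRegularOn G) (hAB : A ⊔ B = G) (hAB' : A ⊓ B = ⊥) (hA : g.IsTotallyIsotropicOn A)
    (hB : g.IsTotallyIsotropicOn B) : finrank K G = 2 * finrank K A := by
  have hle := hG.finrank_le_of_sup_eq hAB hA
  have hge := hG.finrank_le_of_sup_eq (sup_comm A B ▸ hAB) hB
  have h := Submodule.finrank_sup_add_finrank_inf_eq A B
  rw [hAB, hAB', finrank_bot] at h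
  omega

section AntiIsometry

variable {φ : V →ₗ[K] V} {W I G : Submodule K V}

theorem map_mem_of_mem_radical (hinv : ∀ x, φ (φ x) = x)
    (hcompat : ∀ x y, g (φ x) (φ y) = - g x y) (hI : ∀ v, v ∈ I ↔ v ∈ W ∧ ∀ w ∈ W, g v w = 0)
    (hφW : ∀ w ∈ W, φ w ∈ W) {v : V} (hv : v ∈ I) : φ v ∈ I := by
  obtain ⟨hvW, hvperp⟩ := (hI v).mp hv
  refine (hI _).mpr ⟨hφW v hvW, fun w hw => ?_⟩
  rw [← hinv w, hcompat, hvperp _ (hφW w hw), neg_zero]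

theorem isTotallyIsotropicOn_inf_comap_sub_smul [NeZero (2 : K)]
    (hsymm : ∀ x y, g x y = g y x)
    (hcompat : ∀ x y, g (φ x) (φ y) = - g x y) (hIW : I ≤ W) (hIperp : I ≤ g.orthogonal W)
    (hGW : G ≤ W) {ε : K} (hε : ε * ε = 1) :
    g.IsTotallyIsotropicOn (G ⊓ I.comap (φ - ε • LinearMap.id)) := by
  intro x hx y hy
  simp only [Submodule.mem_inf, Submodule.mem_comap, LinearMap.sub_apply, LinearMap.smul_apply,
    LinearMap.id_apply] at hx hy
  obtain ⟨hxG, hxI⟩ := hx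
  obtain ⟨hyG, hyI⟩ := hy
  have h := hcompat x y
  rw [← add_sub_cancel (ε • x) (φ x), ← add_sub_cancel (ε • y) (φ y)] at h
  simp only [map_add, map_smul, LinearMap.add_apply, LinearMap.smul_apply, smul_eq_mul,
    hIperp hyI x (hGW hxG), hIperp hyI _ (hIW hxI), hsymm _ y, hIperp hxI y (hGW hyG)] at h
  have : (2 : K) * g x y = 0 := by linear_combination h - g y x * hε + 2 * hsymm x y
  exact (mul_eq_zero.mp this).resolve_left two_ne_zero

theorem sup_inf_comap_sub_smul_eq [NeZero (2 : K)] (hinv : ∀ x, φ (φ x) = x)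
    (hφI : ∀ v ∈ I, φ v ∈ I) (hφG : ∀ x ∈ G, φ x ∈ I ⊔ G) :
    G ⊓ I.comap (φ - (1 : K) • LinearMap.id) ⊔ G ⊓ I.comap (φ - (-1 : K) • LinearMap.id) =
      G := by
  refine le_antisymm (sup_le inf_le_left inf_le_left) fun x hx => ?_
  obtain ⟨i, hi, y, hy, hxy⟩ := Submodule.mem_sup.mp (hφG x hx)
  have hφy : φ y = x - φ i := by rw [← hinv x, ← hxy, map_add, add_sub_cancel_left]
  refine Submodule.mem_sup.mpr ⟨(2⁻¹ : K) • (x + y), ⟨G.smul_mem _ (G.add_mem hx hy), ?_⟩,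
    (2⁻¹ : K) • (x - y), ⟨G.smul_mem _ (G.sub_mem hx hy), ?_⟩,
    by match_scalars <;> field_simp <;> ring⟩
  · have h : (φ - (1 : K) • LinearMap.id : V →ₗ[K] V) ((2⁻¹ : K) • (x + y)) =
        (2⁻¹ : K) • (i - φ i) := by
      simp only [LinearMap.sub_apply, LinearMap.smul_apply, LinearMap.id_apply, map_smul, map_add,
        ← hxy, hφy]
      match_scalars <;> field_simp <;> ring
    exact (Submodule.mem_comap).mpr (h ▸ I.smul_mem _ (I.sub_mem hi (hφI i hi)))
  · have h : (φ - (-1 : K) • LinearMap.id : V →ₗ[K] V) ((2⁻¹ : K) • (x - y)) =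
        (2⁻¹ : K) • (i + φ i) := by
      simp only [LinearMap.sub_apply, LinearMap.smul_apply, LinearMap.id_apply, map_smul, map_sub,
        ← hxy, hφy]
      match_scalars <;> field_simp <;> ring
    exact (Submodule.mem_comap).mpr (h ▸ I.smul_mem _ (I.add_mem hi (hφI i hi)))

theorem inf_comap_sub_smul_inf_eq_bot [NeZero (2 : K)] (hIG : I ⊓ G = ⊥) :
    G ⊓ I.comap (φ - (1 : K) • LinearMap.id) ⊓ (G ⊓ I.comap (φ - (-1 : K) • LinearMap.id)) =
      ⊥ := by
  refine eq_bot_iff.mpr fun x hx => hIG ▸ Submodule.mem_inf.mpr ⟨?_, hx.1.1⟩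
  simp only [Submodule.mem_inf, Submodule.mem_comap] at hx
  have h : x = (2⁻¹ : K) • ((φ - (-1 : K) • LinearMap.id : V →ₗ[K] V) x -
      (φ - (1 : K) • LinearMap.id : V →ₗ[K] V) x) := by
    simp only [LinearMap.sub_apply, LinearMap.smul_apply, LinearMap.id_apply]
    match_scalars <;> field_simp <;> ring
  exact h ▸ I.smul_mem _ (I.sub_mem hx.2.2 hx.1.2)

theorem exists_isotropic_of_antiIsometry [FiniteDimensional K V] [NeZero (2 : K)]
    (hsymm : ∀ x y, g x y = g y x) (hinv : ∀ x, φ (φ x) = x)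
    (hcompat : ∀ x y, g (φ x) (φ y) = - g x y) (hI : ∀ v, v ∈ I ↔ v ∈ W ∧ ∀ w ∈ W, g v w = 0)
    (hIperp : I ≤ g.orthogonal W) (hG : g.IsRegularOn G) (hWIG : I ⊔ G = W)
    (hφW : ∀ w ∈ W, φ w ∈ W) :
    ∃ l, finrank K G = 2 * l ∧
      ∃ L ≤ W, g.IsTotallyIsotropicOn L ∧ finrank K L = finrank K I + l := by
  have hIW : I ≤ W := hWIG ▸ le_sup_left
  have hGW : G ≤ W := hWIG ▸ le_sup_right
  have hI₀ : g.IsTotallyIsotropicOn I := fun x hx y hy => hIperp hy x (hIW hx)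
  have hIG : I ⊓ G = ⊥ :=
    hG.inf_eq_bot_of_le_orthogonal hsymm (hIperp.trans (orthogonal_le hGW))
  have hφG : ∀ x ∈ G, φ x ∈ I ⊔ G := fun x hx => hWIG ▸ hφW x (hGW hx)
  set P := G ⊓ I.comap (φ - (1 : K) • LinearMap.id)
  set N := G ⊓ I.comap (φ - (-1 : K) • LinearMap.id)
  have hP := isTotallyIsotropicOn_inf_comap_sub_smul hsymm hcompat hIW hIperp hGW (one_mul 1)
  have hN := isTotallyIsotropicOn_inf_comap_sub_smul hsymm hcompat hIW hIperp hGW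
    (neg_mul_neg (1 : K) 1 ▸ one_mul 1)
  have hPN : P ⊔ N = G :=
    sup_inf_comap_sub_smul_eq hinv (fun _ hv => map_mem_of_mem_radical hinv hcompat hI hφW hv)
      hφG
  refine ⟨finrank K P, hG.finrank_eq_two_mul hPN (inf_comap_sub_smul_inf_eq_bot hIG) hP hN,
    I ⊔ P, sup_le hIW (inf_le_left.trans hGW), ?_, ?_⟩
  · refine hI₀.sup hsymm hP fun x hx n hn => ?_
    rw [hsymm]
    exact hIperp hn x (hGW hx.1)
  · have hIP : I ⊓ P = ⊥ := eq_bot_iff.mpr (hIG ▸ inf_le_inf_left I inf_le_left)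
    have h := Submodule.finrank_sup_add_finrank_inf_eq I P
    rw [hIP, finrank_bot, add_zero] at h
    exact h

end AntiIsometry

end LinearMap.BilinForm

theorem stmt4_general {V : Type*} [AddCommGroup V] [Module ℝ V] [FiniteDimensional ℝ V]
    (g : V →ₗ[ℝ] V →ₗ[ℝ] ℝ) (hsymm : ∀ x y, g x y = g y x)
    (φ : V →ₗ[ℝ] V) (hinv : ∀ x, φ (φ x) = x)
    (hcompat : ∀ x y, g (φ x) (φ y) = - g x y)
    (W H I G : Submodule ℝ V)
    -- `I` is the radical (singularity) of `W`, nontrivial since `W` is degenerate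
    (hIdef : ∀ v : V, v ∈ I ↔ v ∈ W ∧ ∀ w ∈ W, g v w = 0)
    -- `H` is a regular hull of `W` : minimal nondegenerate subspace containing `W`
    (hWH : W ≤ H)
    (hHreg : ∀ x ∈ H, (∀ y ∈ H, g x y = 0) → x = 0)
    (hHmin : ∀ H' : Submodule ℝ V, W ≤ H' → H' ≤ H →
      (∀ x ∈ H', (∀ y ∈ H', g x y = 0) → x = 0) → H' = H)
    -- `G` is a maximal nondegenerate subspace of `W`
    (hGW : G ≤ W)
    (hGreg : ∀ x ∈ G, (∀ y ∈ G, g x y = 0) → x = 0)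
    (hGmax : ∀ G' : Submodule ℝ V, G ≤ G' → G' ≤ W →
      (∀ x ∈ G', (∀ y ∈ G', g x y = 0) → x = 0) → G' = G) :
    (∃ e : H ≃ₗ[ℝ] (I × Module.Dual ℝ I) × G,
      ∀ x y : H, g (x : V) (y : V) =
        (e x).1.2 (e y).1.1 + (e y).1.2 (e x).1.1 + g ((e x).2 : V) ((e y).2 : V)) ∧
    ((∀ w ∈ W, φ w ∈ W) →
      ∃ l : ℕ, Module.finrank ℝ G = 2 * l ∧
        Module.finrank ℝ H = 2 * (Module.finrank ℝ I + l) ∧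
        ∃ L : Submodule ℝ V, L ≤ H ∧ (∀ x ∈ L, ∀ y ∈ L, g x y = 0) ∧
          Module.finrank ℝ L = Module.finrank ℝ I + l) := by
  have hIW : I ≤ W := fun v hv => ((hIdef v).mp hv).1
  have hIperp : I ≤ LinearMap.BilinForm.orthogonal g W := fun v hv w hw =>
    hsymm w v ▸ ((hIdef v).mp hv).2 w hw
  have hWIG : I ⊔ G = W :=
    LinearMap.BilinForm.radical_sup_eq_of_maximal hsymm hIdef hGreg hGW hGmax
  obtain ⟨e, he⟩ := LinearMap.BilinForm.exists_linearEquiv_hyperbolic_prod_of_minimal hsymm hIW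
    hIperp hGreg hWIG hWH hHreg hHmin
  refine ⟨⟨e, he⟩, fun hφW => ?_⟩
  obtain ⟨l, hGl, L, hLW, hL, hLrk⟩ := LinearMap.BilinForm.exists_isotropic_of_antiIsometry hsymm
    hinv hcompat hIdef hIperp hGreg hWIG hφW
  have hH : Module.finrank ℝ H = 2 * Module.finrank ℝ I + Module.finrank ℝ G := by
    rw [e.finrank_eq, Module.finrank_prod, Module.finrank_prod, Subspace.dual_finrank_eq]
    ring
  exact ⟨l, hGl, by rw [hH, hGl]; ring, L, hLW.trans hWH, hL, hLrk⟩

/-- Any regular hull `H` of a degenerate subspace `W` with radical `I` is isometric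
to the orthogonal direct sum `(I ⊕ I*) ⊕ G`, where `G` is a maximal nondegenerate
subspace of `W` and `I ⊕ I*` carries its canonical neutral hyperbolic pairing
`⟨(x,α),(y,β)⟩ = α(y) + β(x)`.  In particular, when `W` is `φ`-invariant the hull
has neutral signature `(k+l, k+l)` with `k = dim I` and `G` of signature `(l,l)`,
expressed by the existence of a totally isotropic subspace of `H` of half its
dimension, of dimension `k + l`. -/
theorem stmt4 {V : Type*} [AddCommGroup V] [Module ℝ V] [FiniteDimensional ℝ V]
    (g : V →ₗ[ℝ] V →ₗ[ℝ] ℝ) (hsymm : ∀ x y, g x y = g y x)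
    (hnd : ∀ x, (∀ y, g x y = 0) → x = 0)
    (φ : V →ₗ[ℝ] V) (hinv : ∀ x, φ (φ x) = x)
    (hcompat : ∀ x y, g (φ x) (φ y) = - g x y)
    (W H I G : Submodule ℝ V)
    -- `I` is the radical (singularity) of `W`, nontrivial since `W` is degenerate
    (hIdef : ∀ v : V, v ∈ I ↔ v ∈ W ∧ ∀ w ∈ W, g v w = 0)
    (hIne : I ≠ ⊥)
    -- `H` is a regular hull of `W` : minimal nondegenerate subspace containing `W`
    (hWH : W ≤ H)
    (hHreg : ∀ x ∈ H, (∀ y ∈ H, g x y = 0) → x = 0)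
    (hHmin : ∀ H' : Submodule ℝ V, W ≤ H' → H' ≤ H →
      (∀ x ∈ H', (∀ y ∈ H', g x y = 0) → x = 0) → H' = H)
    -- `G` is a maximal nondegenerate subspace of `W`
    (hGW : G ≤ W)
    (hGreg : ∀ x ∈ G, (∀ y ∈ G, g x y = 0) → x = 0)
    (hGmax : ∀ G' : Submodule ℝ V, G ≤ G' → G' ≤ W →
      (∀ x ∈ G', (∀ y ∈ G', g x y = 0) → x = 0) → G' = G) :
    (∃ e : H ≃ₗ[ℝ] (I × Module.Dual ℝ I) × G,
      ∀ x y : H, g (x : V) (y : V) =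
        (e x).1.2 (e y).1.1 + (e y).1.2 (e x).1.1 + g ((e x).2 : V) ((e y).2 : V)) ∧
    ((∀ w ∈ W, φ w ∈ W) →
      ∃ l : ℕ, Module.finrank ℝ G = 2 * l ∧
        Module.finrank ℝ H = 2 * (Module.finrank ℝ I + l) ∧
        ∃ L : Submodule ℝ V, L ≤ H ∧ (∀ x ∈ L, ∀ y ∈ L, g x y = 0) ∧
          Module.finrank ℝ L = Module.finrank ℝ I + l) :=
  stmt4_general g hsymm φ hinv hcompat W H I G hIdef hWH hHreg hHmin hGW hGreg hGmax
end

section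
/- If f is a slant surface immersion with slant factor λ satisfying |λ| ≠ 1, then the composition A∘f_*: T_p S → N_{f(p)} f is a conformal linear map (with conformal factor λ² − 1), and in particular A is injective, so ker A = 0. -/
/-- If `f` is a slant surface immersion with slant factor `λ`, `|λ| ≠ 1`, then the
composition `A ∘ f_* : T_p S → N_{f(p)} f` is conformal with (nonzero) conformal
factor `λ² − 1`; in particular `A` is injective, i.e. `ker A = 0`. -/
theorem stmt9 {S V : Type*} [AddCommGroup S] [Module ℝ S]
    [AddCommGroup V] [Module ℝ V]
    (gS : S →ₗ[ℝ] S →ₗ[ℝ] ℝ) (g : V →ₗ[ℝ] V →ₗ[ℝ] ℝ)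
    (hgsymm : ∀ x y, g x y = g y x)
    (hndS : ∀ v : S, (∀ w : S, gS v w = 0) → v = 0)
    (φS : S →ₗ[ℝ] S) (φ : V →ₗ[ℝ] V)
    (hφS : ∀ v, φS (φS v) = v) (hφ : ∀ x, φ (φ x) = x)
    (hcompat : ∀ x y, g (φ x) (φ y) = - g x y)
    (hScompat : ∀ v w, gS (φS v) (φS w) = - gS v w)
    (f : S →ₗ[ℝ] V) (hiso : ∀ v w, g (f v) (f w) = gS v w)
    (lam : ℝ) (hlam : |lam| ≠ 1) (A : S →ₗ[ℝ] V)
    (hslant : ∀ v : S, φ (f v) = lam • f (φS v) + A v)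
    (hnormal : ∀ v w : S, g (A v) (f w) = 0) :
    (∀ v w : S, g (A v) (A w) = (lam ^ 2 - 1) * gS v w) ∧
    (lam ^ 2 - 1 ≠ 0) ∧ Function.Injective A := by
  -- key: g(φ f v, f φS w) = -λ gS v w
  have hmix : ∀ v w : S, g (φ (f v)) (f (φS w)) = -lam * gS v w := by
    intro v w
    have h1 : g (φ (f v)) (f (φS w)) = - g (f v) (φ (f (φS w))) := by
      have := hcompat (f v) (φ (f (φS w)))
      rw [hφ] at this
      linarith [this]
    rw [h1, hslant (φS w), hφS]
    simp only [map_add, map_smul, smul_eq_mul]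
    rw [hiso, hgsymm (f v) (A (φS w)), hnormal]
    ring
  have hA : ∀ v w : S, g (A v) (A w) = (lam ^ 2 - 1) * gS v w := by
    intro v w
    have hAv : A v = φ (f v) - lam • f (φS v) := by
      rw [hslant v]; abel
    have hAw : A w = φ (f w) - lam • f (φS w) := by
      rw [hslant w]; abel
    rw [hAv, hAw]
    simp only [map_sub, map_smul, LinearMap.sub_apply, LinearMap.smul_apply, smul_eq_mul]
    rw [hcompat, hmix]
    have hSsymm : gS w v = gS v w := by rw [← hiso, hgsymm, hiso]
    have e1 : g (f (φS v)) (φ (f w)) = -lam * gS v w := by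
      rw [hgsymm, hmix w v, hSsymm]
    have e2 : g (f (φS v)) (f (φS w)) = - gS v w := by
      rw [hiso, hScompat]
    rw [e1, e2, hiso]
    ring
  have hne : lam ^ 2 - 1 ≠ 0 := by
    intro h
    apply hlam
    have : lam ^ 2 = 1 := by linarith
    have h2 : lam ^ 2 = 1 := by linarith
    calc |lam| = Real.sqrt (lam ^ 2) := (Real.sqrt_sq_eq_abs lam).symm
    _ = 1 := by rw [h2, Real.sqrt_one]
  refine ⟨hA, hne, ?_⟩
  rw [injective_iff_map_eq_zero]
  intro v hv
  apply hndS
  intro w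
  have := hA v w
  rw [hv] at this
  simp at this
  rcases this with h | h
  · exact absurd h hne
  · exact h
end

section
/- Let f be a slant surface immersion with |λ| > 1 at a point, and (v₁, v₂ = φ̃ v₁) an orthonormal frame of T_p S with g̃(v₁,v₁)=1, g̃(v₂,v₂)=−1. Set e₁ = f_* v₁, e₂ = f_* v₂, e₃ = A f_*(v₁)/c, e₄ = A f_*(v₂)/c with c = √(λ²−1). Then (e₁,e₂,e₃,e₄) is an orthonormal frame of T_q M with signs (+,−,+,−), and φe₁ = λe₂ + c e₃, φe₂ = λe₁ + c e₄, φe₃ = −c e₁ − λ e₄, φe₄ = −c e₂ − λ e₃. -/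
set_option maxHeartbeats 1000000 in
/-- Local structure of a slant surface immersion with `|λ| > 1` (Proposition 2,
case (\ref{phi1})): with `(v₁, v₂ = φ̃ v₁)` an orthonormal frame of `T_p S`,
`e₁ = f_* v₁`, `e₂ = f_* v₂`, `e₃ = A f_*(v₁)/c`, `e₄ = A f_*(v₂)/c`,
`c = √(λ²−1)`, the vectors `(e₁,e₂,e₃,e₄)` form an orthonormal frame of `T_q M`
with signs `(+,−,+,−)`, and `φe₁ = λe₂ + c e₃`, `φe₂ = λe₁ + c e₄`,
`φe₃ = −c e₁ − λ e₄`, `φe₄ = −c e₂ − λ e₃`. -/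
theorem stmt10 {S V : Type*} [AddCommGroup S] [Module ℝ S]
    [AddCommGroup V] [Module ℝ V] [FiniteDimensional ℝ V]
    (hdimV : Module.finrank ℝ V = 4)
    (gS : S →ₗ[ℝ] S →ₗ[ℝ] ℝ) (g : V →ₗ[ℝ] V →ₗ[ℝ] ℝ)
    (hgsymm : ∀ x y, g x y = g y x)
    (φS : S →ₗ[ℝ] S) (φ : V →ₗ[ℝ] V)
    (hφS : ∀ v, φS (φS v) = v) (hφ : ∀ x, φ (φ x) = x)
    (hcompat : ∀ x y, g (φ x) (φ y) = - g x y)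
    (hScompat : ∀ v w, gS (φS v) (φS w) = - gS v w)
    (f : S →ₗ[ℝ] V) (hiso : ∀ v w, g (f v) (f w) = gS v w)
    (lam : ℝ) (hlam : 1 < |lam|) (A : S →ₗ[ℝ] V)
    (hslant : ∀ v : S, φ (f v) = lam • f (φS v) + A v)
    (hnormal : ∀ v w : S, g (A v) (f w) = 0)
    (c : ℝ) (hc : c = Real.sqrt (lam ^ 2 - 1))
    (v₁ v₂ : S) (hv₂ : v₂ = φS v₁)
    (h11 : gS v₁ v₁ = 1) (h22 : gS v₂ v₂ = -1) (h12 : gS v₁ v₂ = 0)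
    (e₁ e₂ e₃ e₄ : V)
    (he₁ : e₁ = f v₁) (he₂ : e₂ = f v₂)
    (he₃ : e₃ = c⁻¹ • A v₁) (he₄ : e₄ = c⁻¹ • A v₂) :
    (g e₁ e₁ = 1 ∧ g e₂ e₂ = -1 ∧ g e₃ e₃ = 1 ∧ g e₄ e₄ = -1 ∧
     g e₁ e₂ = 0 ∧ g e₁ e₃ = 0 ∧ g e₁ e₄ = 0 ∧
     g e₂ e₃ = 0 ∧ g e₂ e₄ = 0 ∧ g e₃ e₄ = 0) ∧
    Submodule.span ℝ {e₁, e₂, e₃, e₄} = ⊤ ∧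
    (φ e₁ = lam • e₂ + c • e₃ ∧ φ e₂ = lam • e₁ + c • e₄ ∧
     φ e₃ = -(c • e₁) - lam • e₄ ∧ φ e₄ = -(c • e₂) - lam • e₃) := by
  have hsq : 0 < lam ^ 2 - 1 := by nlinarith [sq_abs lam, abs_nonneg lam]
  have hc2 : c ^ 2 = lam ^ 2 - 1 := by rw [hc]; exact Real.sq_sqrt hsq.le
  have hcpos : 0 < c := by rw [hc]; exact Real.sqrt_pos.mpr hsq
  have hc0 : c ≠ 0 := hcpos.ne'
  have hgsS : ∀ v w : S, gS v w = gS w v := fun v w => by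
    rw [← hiso, hgsymm, hiso]
  have hA : ∀ v : S, A v = φ (f v) - lam • f (φS v) := fun v => by
    rw [hslant]; abel
  have hfA : ∀ v w : S, g (f w) (A v) = 0 := fun v w => by
    rw [hgsymm]; exact hnormal v w
  have hfφ : ∀ v w : S, g (f v) (φ (f w)) = lam * gS v (φS w) := fun v w => by
    rw [hslant w]
    simp [hiso, hfA, smul_eq_mul]
  have hAA : ∀ v w : S, g (A v) (A w) = (lam ^ 2 - 1) * gS v w := fun v w => by
    rw [hA v, hA w]
    simp only [map_sub, map_smul, LinearMap.sub_apply, LinearMap.smul_apply,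
      smul_eq_mul]
    rw [hcompat, hgsymm (φ (f v)) (f (φS w)), hfφ, hfφ, hiso, hiso, hScompat,
      hScompat, hgsS w v]
    ring
  have hφv₂ : φS v₂ = v₁ := by rw [hv₂, hφS]
  have h21 : gS v₂ v₁ = 0 := by rw [hgsS, h12]
  -- Gram matrix
  have G11 : g e₁ e₁ = 1 := by rw [he₁, hiso, h11]
  have G22 : g e₂ e₂ = -1 := by rw [he₂, hiso, h22]
  have G12 : g e₁ e₂ = 0 := by rw [he₁, he₂, hiso, h12]
  have G13 : g e₁ e₃ = 0 := by rw [he₁, he₃]; simp [hfA]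
  have G14 : g e₁ e₄ = 0 := by rw [he₁, he₄]; simp [hfA]
  have G23 : g e₂ e₃ = 0 := by rw [he₂, he₃]; simp [hfA]
  have G24 : g e₂ e₄ = 0 := by rw [he₂, he₄]; simp [hfA]
  have G33 : g e₃ e₃ = 1 := by
    rw [he₃]; simp only [map_smul, LinearMap.smul_apply, smul_eq_mul, hAA, h11]
    field_simp
    nlinarith [hc2]
  have G44 : g e₄ e₄ = -1 := by
    rw [he₄]; simp only [map_smul, LinearMap.smul_apply, smul_eq_mul, hAA, h22]
    field_simp
    nlinarith [hc2]
  have G34 : g e₃ e₄ = 0 := by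
    rw [he₃, he₄]; simp [hAA, h12]
  -- phi action
  have hφe₁ : φ e₁ = lam • e₂ + c • e₃ := by
    rw [he₁, hslant, ← hv₂, ← he₂, he₃, smul_smul, mul_inv_cancel₀ hc0, one_smul]
  have hφe₂ : φ e₂ = lam • e₁ + c • e₄ := by
    rw [he₂, hslant, hφv₂, ← he₁, he₄, smul_smul, mul_inv_cancel₀ hc0, one_smul]
  have hφe₃ : φ e₃ = -(c • e₁) - lam • e₄ := by
    rw [he₃, map_smul, hA v₁, map_sub, hφ, map_smul, ← hv₂, hslant v₂, hφv₂,
      he₁, he₄]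
    match_scalars
    · field_simp; nlinarith [hc2]
    · field_simp
  have hφe₄ : φ e₄ = -(c • e₂) - lam • e₃ := by
    rw [he₄, map_smul, hA v₂, map_sub, hφ, map_smul, hφv₂, hslant v₁, ← hv₂,
      he₂, he₃]
    match_scalars
    · field_simp; nlinarith [hc2]
    · field_simp
  refine ⟨⟨G11, G22, G33, G44, G12, G13, G14, G23, G24, G34⟩, ?_,
    hφe₁, hφe₂, hφe₃, hφe₄⟩
  -- span
  set b : Fin 4 → V := ![e₁, e₂, e₃, e₄] with hb
  have hrange : ({e₁, e₂, e₃, e₄} : Set V) = Set.range b := by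
    ext x
    simp only [hb, Matrix.range_cons, Matrix.range_empty, Set.union_empty,
      Set.mem_insert_iff, Set.mem_singleton_iff, Set.mem_union]
  have hli : LinearIndependent ℝ b := by
    rw [Fintype.linearIndependent_iff]
    intro a ha i
    have hsum : a 0 • e₁ + a 1 • e₂ + a 2 • e₃ + a 3 • e₄ = 0 := by
      simpa [hb, Fin.sum_univ_four] using ha
    have key : ∀ x : V, g (a 0 • e₁ + a 1 • e₂ + a 2 • e₃ + a 3 • e₄) x
        = a 0 * g e₁ x + a 1 * g e₂ x + a 2 * g e₃ x + a 3 * g e₄ x := by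
      intro x; simp [smul_eq_mul]
    have k1 := key e₁
    have k2 := key e₂
    have k3 := key e₃
    have k4 := key e₄
    rw [hsum, map_zero, LinearMap.zero_apply] at k1 k2 k3 k4
    rw [G11, hgsymm e₂ e₁, G12, hgsymm e₃ e₁, G13, hgsymm e₄ e₁, G14] at k1
    rw [G12, G22, hgsymm e₃ e₂, G23, hgsymm e₄ e₂, G24] at k2
    rw [G13, G23, G33, hgsymm e₄ e₃, G34] at k3
    rw [G14, G24, G34, G44] at k4
    fin_cases i
    · show a 0 = 0; linarith
    · show a 1 = 0; linarith
    · show a 2 = 0; linarith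
    · show a 3 = 0; linarith
  rw [hrange]
  apply Submodule.eq_top_of_finrank_eq
  rw [finrank_span_eq_card hli, hdimV, Fintype.card_fin]
end

section
/- Let f be a slant surface immersion with |λ| < 1 at a point, and (v₁, v₂ = φ̃ v₁) an orthonormal frame of T_p S. Set e₁ = f_* v₁, e₂ = f_* v₂, e₃ = A f_*(v₂)/c, e₄ = A f_*(v₁)/c with c = √(1−λ²). Then (e₁,e₂,e₃,e₄) is an orthonormal frame with signs (+,−,+,−), and φe₁ = λe₂ + c e₄, φe₂ = λe₁ + c e₃, φe₃ = c e₂ − λ e₄, φe₄ = c e₁ − λ e₃. -/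
/-!
Applying `φ` to the slant relation `φ (f v) = λ f (φ̃ v) + A v` and using `φ² = 1`, `φ̃² = 1` gives
`φ (A v) = (1 - λ²) f v - λ A (φ̃ v)`. Feeding this into `g (φ x, φ y) = -g (x, y)` and using that
`A` is normal shows `g (A v, A w) = -(1 - λ²) g̃ (v, w)`, so `A v / c` behaves like `f (φ̃ v)`:
the four vectors are pseudo-orthonormal of signature `(+, −, +, −)`, hence linearly independent
and a basis of the 4-dimensional `V`, and the formulas for `φ` are the two relations above.
-/

open Module Submodule

section SlantSurface

variable {S V : Type*} [AddCommGroup S] [Module ℝ S] [AddCommGroup V] [Module ℝ V]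
  {gS : S →ₗ[ℝ] S →ₗ[ℝ] ℝ} {g : V →ₗ[ℝ] V →ₗ[ℝ] ℝ} {φS : S →ₗ[ℝ] S} {φ : V →ₗ[ℝ] V}
  {f A : S →ₗ[ℝ] V} {lam : ℝ}

theorem apply_normal_of_slant (hφS : ∀ v, φS (φS v) = v) (hφ : ∀ x, φ (φ x) = x)
    (hslant : ∀ v, φ (f v) = lam • f (φS v) + A v) (v : S) :
    φ (A v) = (1 - lam ^ 2) • f v - lam • A (φS v) := by
  have h := hφ (f v)
  rw [hslant, map_add, map_smul, hslant, hφS] at h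
  linear_combination (norm := module) h

variable (hgsymm : ∀ x y, g x y = g y x) (hφS : ∀ v, φS (φS v) = v) (hφ : ∀ x, φ (φ x) = x)
  (hcompat : ∀ x y, g (φ x) (φ y) = -g x y) (hiso : ∀ v w, g (f v) (f w) = gS v w)
  (hslant : ∀ v, φ (f v) = lam • f (φS v) + A v) (hnormal : ∀ v w, g (A v) (f w) = 0)
include hgsymm hφS hφ hcompat hiso hslant hnormal

theorem inner_normal_normal_eq_of_slant (v w : S) :
    g (A v) (A w) = -(1 - lam ^ 2) ^ 2 * gS v w - lam ^ 2 * g (A (φS v)) (A (φS w)) := by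
  have h := hcompat (A v) (A w)
  rw [apply_normal_of_slant hφS hφ hslant, apply_normal_of_slant hφS hφ hslant] at h
  simp only [map_sub, map_smul, LinearMap.sub_apply, LinearMap.smul_apply, smul_eq_mul, hiso,
    hnormal, hgsymm (f v) (A _)] at h
  linear_combination h

-- Applied at `(v, w)` and at `(φ̃ v, φ̃ w)`: `(1 - λ⁴) g(Av, Aw) = -(1 - λ²)(1 - λ⁴) g̃(v, w)`.
theorem inner_normal_normal_of_slant (hScompat : ∀ v w, gS (φS v) (φS w) = -gS v w)
    (hlam : lam ^ 2 ≠ 1) (v w : S) :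
    g (A v) (A w) = -(1 - lam ^ 2) * gS v w := by
  have h₁ := inner_normal_normal_eq_of_slant hgsymm hφS hφ hcompat hiso hslant hnormal v w
  have h₂ := inner_normal_normal_eq_of_slant hgsymm hφS hφ hcompat hiso hslant hnormal
    (φS v) (φS w)
  rw [hφS, hφS, hScompat] at h₂
  have hlam4 : (1 : ℝ) - lam ^ 4 ≠ 0 := by
    rw [show (1 : ℝ) - lam ^ 4 = (1 - lam ^ 2) * (1 + lam ^ 2) by ring]
    exact mul_ne_zero (sub_ne_zero.2 hlam.symm) (by positivity)
  refine mul_left_cancel₀ hlam4 ?_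
  linear_combination h₁ - lam ^ 2 * h₂

end SlantSurface

section NormalizedNormal

variable {S V : Type*} [AddCommGroup S] [Module ℝ S] [AddCommGroup V] [Module ℝ V]
  {gS : S →ₗ[ℝ] S →ₗ[ℝ] ℝ} {g : V →ₗ[ℝ] V →ₗ[ℝ] ℝ} {f A : S →ₗ[ℝ] V} {lam c : ℝ}

theorem inner_inv_smul_normal (hAA : ∀ v w, g (A v) (A w) = -(1 - lam ^ 2) * gS v w)
    (hc : c ^ 2 = 1 - lam ^ 2) (hc0 : c ≠ 0) (v w : S) :
    g (c⁻¹ • A v) (c⁻¹ • A w) = -gS v w := by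
  simp only [map_smul, LinearMap.smul_apply, smul_eq_mul, hAA, ← hc]
  field_simp

theorem apply_inv_smul_normal {φS : S →ₗ[ℝ] S} {φ : V →ₗ[ℝ] V}
    (hφA : ∀ v, φ (A v) = (1 - lam ^ 2) • f v - lam • A (φS v))
    (hc : c ^ 2 = 1 - lam ^ 2) (hc0 : c ≠ 0) (v : S) :
    φ (c⁻¹ • A v) = c • f v - lam • c⁻¹ • A (φS v) := by
  rw [map_smul, hφA, ← hc, smul_sub, smul_smul, smul_comm c⁻¹ lam, sq, inv_mul_cancel_left₀ hc0]

end NormalizedNormal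

theorem LinearMap.isOrthoᵢ_vecCons_four {K V : Type*} [CommRing K] [AddCommGroup V] [Module K V]
    {B : V →ₗ[K] V →ₗ[K] K} (hB : ∀ x y, B x y = B y x) {e₁ e₂ e₃ e₄ : V}
    (h₁₂ : B e₁ e₂ = 0) (h₁₃ : B e₁ e₃ = 0) (h₁₄ : B e₁ e₄ = 0) (h₂₃ : B e₂ e₃ = 0)
    (h₂₄ : B e₂ e₄ = 0) (h₃₄ : B e₃ e₄ = 0) :
    B.IsOrthoᵢ ![e₁, e₂, e₃, e₄] := by
  rw [LinearMap.isOrthoᵢ_def]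
  intro i j hij
  fin_cases i <;> fin_cases j <;> first
    | exact absurd rfl hij
    | assumption
    | (rw [hB]; assumption)

theorem span_eq_top_of_gram_four {K V : Type*} [Field K] [AddCommGroup V] [Module K V]
    [FiniteDimensional K V] (hdim : finrank K V = 4) {B : V →ₗ[K] V →ₗ[K] K}
    (hB : ∀ x y, B x y = B y x) {e₁ e₂ e₃ e₄ : V}
    (h : B e₁ e₁ = 1 ∧ B e₂ e₂ = -1 ∧ B e₃ e₃ = 1 ∧ B e₄ e₄ = -1 ∧
      B e₁ e₂ = 0 ∧ B e₁ e₃ = 0 ∧ B e₁ e₄ = 0 ∧ B e₂ e₃ = 0 ∧ B e₂ e₄ = 0 ∧ B e₃ e₄ = 0) :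
    span K {e₁, e₂, e₃, e₄} = ⊤ := by
  obtain ⟨h₁₁, h₂₂, h₃₃, h₄₄, h₁₂, h₁₃, h₁₄, h₂₃, h₂₄, h₃₄⟩ := h
  have hli := LinearMap.linearIndependent_of_isOrthoᵢ
    (LinearMap.isOrthoᵢ_vecCons_four hB h₁₂ h₁₃ h₁₄ h₂₃ h₂₄ h₃₄) (by
      intro i
      fin_cases i <;> simp only [Fin.zero_eta, Fin.mk_one, Fin.reduceFinMk, Matrix.cons_val,
        h₁₁, h₂₂, h₃₃, h₄₄] <;> norm_num)
  simpa only [Matrix.range_cons, Matrix.range_empty, Set.union_empty, Set.singleton_union]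
    using hli.span_eq_top_of_card_eq_finrank (by simp [hdim])

/-- Local structure of a slant surface immersion with `|λ| < 1` (Proposition 2,
case (\ref{phi2})): with `(v₁, v₂ = φ̃ v₁)` an orthonormal frame of `T_p S`,
`e₁ = f_* v₁`, `e₂ = f_* v₂`, `e₃ = A f_*(v₂)/c`, `e₄ = A f_*(v₁)/c`,
`c = √(1−λ²)`, the vectors `(e₁,e₂,e₃,e₄)` form an orthonormal frame with signs
`(+,−,+,−)`, and `φe₁ = λe₂ + c e₄`, `φe₂ = λe₁ + c e₃`, `φe₃ = c e₂ − λ e₄`,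
`φe₄ = c e₁ − λ e₃`. -/
theorem stmt11 {S V : Type*} [AddCommGroup S] [Module ℝ S]
    [AddCommGroup V] [Module ℝ V] [FiniteDimensional ℝ V]
    (hdimV : Module.finrank ℝ V = 4)
    (gS : S →ₗ[ℝ] S →ₗ[ℝ] ℝ) (g : V →ₗ[ℝ] V →ₗ[ℝ] ℝ)
    (hgsymm : ∀ x y, g x y = g y x)
    (φS : S →ₗ[ℝ] S) (φ : V →ₗ[ℝ] V)
    (hφS : ∀ v, φS (φS v) = v) (hφ : ∀ x, φ (φ x) = x)
    (hcompat : ∀ x y, g (φ x) (φ y) = - g x y)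
    (hScompat : ∀ v w, gS (φS v) (φS w) = - gS v w)
    (f : S →ₗ[ℝ] V) (hiso : ∀ v w, g (f v) (f w) = gS v w)
    (lam : ℝ) (hlam : |lam| < 1) (A : S →ₗ[ℝ] V)
    (hslant : ∀ v : S, φ (f v) = lam • f (φS v) + A v)
    (hnormal : ∀ v w : S, g (A v) (f w) = 0)
    (c : ℝ) (hc : c = Real.sqrt (1 - lam ^ 2))
    (v₁ v₂ : S) (hv₂ : v₂ = φS v₁)
    (h11 : gS v₁ v₁ = 1) (h22 : gS v₂ v₂ = -1) (h12 : gS v₁ v₂ = 0)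
    (e₁ e₂ e₃ e₄ : V)
    (he₁ : e₁ = f v₁) (he₂ : e₂ = f v₂)
    (he₃ : e₃ = c⁻¹ • A v₂) (he₄ : e₄ = c⁻¹ • A v₁) :
    (g e₁ e₁ = 1 ∧ g e₂ e₂ = -1 ∧ g e₃ e₃ = 1 ∧ g e₄ e₄ = -1 ∧
     g e₁ e₂ = 0 ∧ g e₁ e₃ = 0 ∧ g e₁ e₄ = 0 ∧
     g e₂ e₃ = 0 ∧ g e₂ e₄ = 0 ∧ g e₃ e₄ = 0) ∧
    Submodule.span ℝ {e₁, e₂, e₃, e₄} = ⊤ ∧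
    (φ e₁ = lam • e₂ + c • e₄ ∧ φ e₂ = lam • e₁ + c • e₃ ∧
     φ e₃ = c • e₂ - lam • e₄ ∧ φ e₄ = c • e₁ - lam • e₃) := by
  have hlam2 : 0 < 1 - lam ^ 2 := by nlinarith [sq_abs lam, abs_nonneg lam]
  have hc2 : c ^ 2 = 1 - lam ^ 2 := hc ▸ Real.sq_sqrt hlam2.le
  have hc0 : c ≠ 0 := hc ▸ (Real.sqrt_pos.2 hlam2).ne'
  have hφA := apply_normal_of_slant hφS hφ hslant
  have hAA := inner_normal_normal_of_slant hgsymm hφS hφ hcompat hiso hslant hnormal hScompat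
    (by linarith : lam ^ 2 < 1).ne
  have horth : ∀ v w, g (f v) (c⁻¹ • A w) = 0 := fun v w => by
    rw [map_smul, hgsymm, hnormal, smul_zero]
  have h21 : gS v₂ v₁ = 0 := by rw [← hiso, hgsymm, hiso, h12]
  subst he₁ he₂ he₃ he₄
  refine ⟨?gram, span_eq_top_of_gram_four hdimV hgsymm ?gram, ?φ₁, ?φ₂, ?φ₃, ?φ₄⟩
  case gram =>
    simp only [hiso, inner_inv_smul_normal hAA hc2 hc0, horth, h11, h22, h12, h21]
    norm_num
  case φ₁ => rw [hslant, ← hv₂, smul_inv_smul₀ hc0]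
  case φ₂ => rw [hslant, hv₂, hφS, ← hv₂, smul_inv_smul₀ hc0]
  case φ₃ => rw [apply_inv_smul_normal hφA hc2 hc0, hv₂, hφS]
  case φ₄ => rw [apply_inv_smul_normal hφA hc2 hc0, hv₂]
end

section
/- Let f be a slant surface immersion with |λ| = 1 at a point and A ≠ 0. Then the image of A is an isotropic line l in the normal plane N_q f, so A f_*(v) = α(v)·n for a 1-form α on T_p S and a nonzero isotropic vector n spanning l; moreover φn = εn for some ε = ±1, and α(φ̃ v) = −(λ/ε) α(v). -/
/-- Slant surface immersion with `|λ| = 1` and nonzero normal map: the image of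
`A` is an isotropic line `l` in the normal plane `N_q f`, so `A f_*(v) = α(v) n`
for a 1-form `α` on `T_p S` and a nonzero isotropic vector `n` spanning `l`;
moreover `φ n = ε n` for some `ε = ±1`, and `α(φ̃ v) = −(λ/ε) α(v)`. -/
theorem stmt12 {S V : Type*} [AddCommGroup S] [Module ℝ S]
    [AddCommGroup V] [Module ℝ V] [FiniteDimensional ℝ V]
    (gS : S →ₗ[ℝ] S →ₗ[ℝ] ℝ) (g : V →ₗ[ℝ] V →ₗ[ℝ] ℝ)
    (hgsymm : ∀ x y, g x y = g y x)
    (φS : S →ₗ[ℝ] S) (φ : V →ₗ[ℝ] V)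
    (hφS : ∀ v, φS (φS v) = v) (hφ : ∀ x, φ (φ x) = x)
    (hcompat : ∀ x y, g (φ x) (φ y) = - g x y)
    (hScompat : ∀ v w, gS (φS v) (φS w) = - gS v w)
    (f : S →ₗ[ℝ] V) (hiso : ∀ v w, g (f v) (f w) = gS v w)
    (lam : ℝ) (hlam : lam = 1 ∨ lam = -1) (A : S →ₗ[ℝ] V)
    (hslant : ∀ v : S, φ (f v) = lam • f (φS v) + A v)
    -- the normal plane `N`, a 2-dimensional nondegenerate (neutral) plane
    (N : Submodule ℝ V) (hNdim : Module.finrank ℝ N = 2)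
    (hNnormal : ∀ x ∈ N, ∀ w : S, g x (f w) = 0)
    (hNnd : ∀ x ∈ N, (∀ y ∈ N, g x y = 0) → x = 0)
    (hAN : ∀ v : S, A v ∈ N)
    (hA : A ≠ 0) :
    ∃ n : V, n ∈ N ∧ n ≠ 0 ∧ g n n = 0 ∧
      (∀ v : S, A v ∈ Submodule.span ℝ {n}) ∧
      ∃ ε : ℝ, (ε = 1 ∨ ε = -1) ∧ φ n = ε • n ∧
        ∃ α : S →ₗ[ℝ] ℝ, (∀ v : S, A v = α v • n) ∧
          ∀ v : S, α (φS v) = -(lam / ε) * α v := by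
  have hlam2 : lam * lam = 1 := by rcases hlam with h | h <;> rw [h] <;> norm_num
  -- φ (A v) = -lam • A (φS v)
  have hφA : ∀ v, φ (A v) = (-lam) • A (φS v) := by
    intro v
    have h1 : φ (φ (f v)) = φ (lam • f (φS v) + A v) := by rw [hslant v]
    rw [hφ, map_add, map_smul, hslant (φS v), hφS] at h1
    -- h1 : f v = lam • (lam • f v + A (φS v)) + φ (A v)
    have h3 : φ (A v) = f v - lam • (lam • f v + A (φS v)) := by
      have : φ (A v) = (lam • (lam • f v + A (φS v)) + φ (A v))
          - lam • (lam • f v + A (φS v)) := by abel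
      rw [this, ← h1]
    rw [smul_add, smul_smul, hlam2, one_smul] at h3
    rw [h3]; module
  have hgSsymm : ∀ v w, gS v w = gS w v := fun v w => by
    rw [← hiso, hgsymm, hiso]
  -- A v = φ (f v) - lam • f (φS v)
  have hAv : ∀ v, A v = φ (f v) - lam • f (φS v) := by
    intro v; rw [hslant v]; abel
  -- image of A is totally isotropic
  have hAA : ∀ v w, g (A v) (A w) = 0 := by
    intro v w
    have hb : g (φ (f v)) (f (φS w)) = -lam * gS v w := by
      rw [hslant v]
      simp only [map_add, map_smul, LinearMap.add_apply, LinearMap.smul_apply,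
        smul_eq_mul]
      rw [hiso, hScompat, hNnormal (A v) (hAN v)]; ring
    have hc : g (f (φS v)) (φ (f w)) = -lam * gS v w := by
      rw [hgsymm, hslant w]
      simp only [map_add, map_smul, LinearMap.add_apply, LinearMap.smul_apply,
        smul_eq_mul]
      rw [hiso, hScompat, hNnormal (A w) (hAN w), hgSsymm w v]; ring
    rw [hAv v, hAv w]
    simp only [map_sub, map_smul, LinearMap.sub_apply, LinearMap.smul_apply,
      smul_eq_mul]
    rw [hcompat, hb, hc, hiso, hiso, hScompat]
    linear_combination gS v w * hlam2
  -- a vector where A is nonzero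
  obtain ⟨v0, hv0⟩ : ∃ v0, A v0 ≠ 0 := by
    by_contra h
    push_neg at h
    exact hA (LinearMap.ext fun v => by simp [h v])
  obtain ⟨n, hn_def⟩ : ∃ n, n = A v0 := ⟨_, rfl⟩
  have hv0' : n ≠ 0 := hn_def ▸ hv0
  have hnN : n ∈ N := hn_def ▸ hAN v0
  have hgnn : g n n = 0 := by rw [hn_def]; exact hAA v0 v0
  -- every A v lies in the span of n
  have hspan : ∀ v : S, A v ∈ Submodule.span ℝ {n} := by
    intro v
    by_contra hmem
    have hli : LinearIndependent ℝ ![n, A v] := by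
      rw [LinearIndependent.pair_iff]
      intro s t hst
      by_cases ht : t = 0
      · subst ht
        rw [zero_smul, add_zero] at hst
        exact ⟨(smul_eq_zero.mp hst).resolve_right hv0', rfl⟩
      · exfalso
        apply hmem
        have h2 : t • A v = -(s • n) := by
          have h2' : t • A v = (s • n + t • A v) - s • n := by abel
          rw [h2', hst, zero_sub]
        have h3 : A v = (-(t⁻¹ * s)) • n := by
          calc A v = t⁻¹ • (t • A v) := by
                rw [smul_smul, inv_mul_cancel₀ ht, one_smul]
            _ = t⁻¹ • (-(s • n)) := by rw [h2]
            _ = (-(t⁻¹ * s)) • n := by rw [smul_neg, smul_smul, neg_smul]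
        rw [h3]
        exact Submodule.smul_mem _ _ (Submodule.mem_span_singleton_self n)
    -- lift to N
    have hliN : LinearIndependent ℝ ![(⟨n, hnN⟩ : N), ⟨A v, hAN v⟩] := by
      apply LinearIndependent.of_comp N.subtype
      convert hli
      ext i
      fin_cases i <;> rfl
    have hcard : Module.finrank ℝ
        (Submodule.span ℝ (Set.range ![(⟨n, hnN⟩ : N), ⟨A v, hAN v⟩])) = 2 := by
      rw [finrank_span_eq_card hliN]; simp
    have htop : Submodule.span ℝ (Set.range ![(⟨n, hnN⟩ : N), ⟨A v, hAN v⟩]) = ⊤ := by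
      apply Submodule.eq_top_of_finrank_eq
      rw [hcard, hNdim]
    have horth : ∀ y ∈ N, g n y = 0 := by
      intro y hy
      have hmem2 : (⟨y, hy⟩ : N) ∈
          Submodule.span ℝ (Set.range ![(⟨n, hnN⟩ : N), ⟨A v, hAN v⟩]) := by
        rw [htop]; trivial
      rw [Matrix.range_cons_cons_empty, Submodule.mem_span_pair] at hmem2
      obtain ⟨a, b, hab⟩ := hmem2
      have hy' : y = a • n + b • A v := by
        have := congrArg (N.subtype) hab
        simpa using this.symm
      rw [hy', map_add, map_smul, map_smul, smul_eq_mul, smul_eq_mul, hgnn,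
        hn_def, hAA v0 v]
      ring
    exact hv0' (hNnd n hnN horth)
  -- eigenvalue ε of φ on n
  obtain ⟨c, hc⟩ := Submodule.mem_span_singleton.mp (hspan (φS v0))
  obtain ⟨ε, hεval⟩ : ∃ ε : ℝ, ε = -lam * c := ⟨_, rfl⟩
  have hφn : φ n = ε • n := by
    rw [hεval, hn_def, hφA v0, ← hc, smul_smul, ← hn_def]
  have hεsq : ε * ε = 1 := by
    have h1 : φ (φ n) = n := hφ n
    rw [hφn, map_smul, hφn, smul_smul] at h1
    by_contra hne
    have hz : ((ε * ε) - 1) • n = 0 := by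
      rw [sub_smul, one_smul, h1, sub_self]
    have := (smul_eq_zero.mp hz).resolve_right hv0'
    exact hne (by linarith)
  have hε : ε = 1 ∨ ε = -1 := mul_self_eq_one_iff.mp hεsq
  -- dual functional
  obtain ⟨ℓ, hℓ⟩ : ∃ ℓ : Module.Dual ℝ V, ℓ n ≠ 0 := by
    by_contra h
    push_neg at h
    exact hv0' ((Module.forall_dual_apply_eq_zero_iff ℝ n).mp h)
  have hℓ'n : ((ℓ n)⁻¹ • ℓ) n = 1 := by
    simp [inv_mul_cancel₀ hℓ]
  refine ⟨n, hnN, hv0', hgnn, hspan, ε, hε, hφn, ((ℓ n)⁻¹ • ℓ).comp A, ?_, ?_⟩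
  · intro v
    obtain ⟨d, hd⟩ := Submodule.mem_span_singleton.mp (hspan v)
    rw [LinearMap.comp_apply, ← hd, map_smul, smul_eq_mul, hℓ'n, mul_one]
  · intro v
    obtain ⟨d, hd⟩ := Submodule.mem_span_singleton.mp (hspan v)
    obtain ⟨e, he⟩ := Submodule.mem_span_singleton.mp (hspan (φS v))
    have key : φ (A v) = (-lam) • A (φS v) := hφA v
    rw [← hd, ← he, map_smul, hφn, smul_smul, smul_smul] at key
    have hcoef : d * ε = -lam * e := by
      by_contra hne
      have hz : (d * ε - -lam * e) • n = 0 := by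
        rw [sub_smul, key, sub_self]
      have := (smul_eq_zero.mp hz).resolve_right hv0'
      exact hne (by linarith)
    have hαv : (((ℓ n)⁻¹ • ℓ).comp A) v = d := by
      rw [LinearMap.comp_apply, ← hd, map_smul, smul_eq_mul, hℓ'n, mul_one]
    have hαφv : (((ℓ n)⁻¹ • ℓ).comp A) (φS v) = e := by
      rw [LinearMap.comp_apply, ← he, map_smul, smul_eq_mul, hℓ'n, mul_one]
    rw [hαv, hαφv]
    rcases hε with h | h <;> rcases hlam with hl | hl <;> subst h <;> subst hl <;>
      norm_num at hcoef ⊢ <;> linarith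
end

section
/- Let (V, g) be ℝ⁴ with neutral metric making (e₁,e₂,e₃,e₄) orthonormal with signs (+,−,+,−), λ ∈ ℝ with |λ| > 1, c = √(λ²−1), and define φ by φe₁ = λe₂ + c e₃, φe₂ = λe₁ + c e₄, φe₃ = −c e₁ − λ e₄, φe₄ = −c e₂ − λ e₃. Then φ² = Id, g(φX, φY) = −g(X, Y), and the ±1 eigenspaces of φ each have dimension 2, i.e. (g, φ) is an almost para-Hermitian structure on ℝ⁴. -/
/-- On `ℝ⁴` with the neutral metric making the standard basis orthonormal with
signs `(+,−,+,−)`, for `|λ| > 1` and `c = √(λ²−1)`, the linear map `φ` defined by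
`φe₁ = λe₂ + c e₃`, `φe₂ = λe₁ + c e₄`, `φe₃ = −c e₁ − λ e₄`, `φe₄ = −c e₂ − λ e₃`
satisfies `φ² = Id`, `g(φX,φY) = −g(X,Y)`, and its `±1` eigenspaces each have
dimension 2, i.e. `(g, φ)` is an almost para-Hermitian structure on `ℝ⁴`. -/
theorem stmt13 (lam : ℝ) (hlam : 1 < |lam|) (c : ℝ) (hc : c = Real.sqrt (lam ^ 2 - 1))
    (g : (Fin 4 → ℝ) → (Fin 4 → ℝ) → ℝ)
    (hg : ∀ x y : Fin 4 → ℝ, g x y = x 0 * y 0 - x 1 * y 1 + x 2 * y 2 - x 3 * y 3)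
    (φ : (Fin 4 → ℝ) →ₗ[ℝ] (Fin 4 → ℝ))
    (h1 : φ ((Pi.single 0 1 : Fin 4 → ℝ)) = lam • (Pi.single 1 1 : Fin 4 → ℝ) + c • (Pi.single 2 1 : Fin 4 → ℝ))
    (h2 : φ ((Pi.single 1 1 : Fin 4 → ℝ)) = lam • (Pi.single 0 1 : Fin 4 → ℝ) + c • (Pi.single 3 1 : Fin 4 → ℝ))
    (h3 : φ ((Pi.single 2 1 : Fin 4 → ℝ)) = -(c • (Pi.single 0 1 : Fin 4 → ℝ)) - lam • (Pi.single 3 1 : Fin 4 → ℝ))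
    (h4 : φ ((Pi.single 3 1 : Fin 4 → ℝ)) = -(c • (Pi.single 1 1 : Fin 4 → ℝ)) - lam • (Pi.single 2 1 : Fin 4 → ℝ)) :
    (∀ x, φ (φ x) = x) ∧
    (∀ x y, g (φ x) (φ y) = - g x y) ∧
    Module.finrank ℝ (Module.End.eigenspace (φ : Module.End ℝ (Fin 4 → ℝ)) 1) = 2 ∧
    Module.finrank ℝ (Module.End.eigenspace (φ : Module.End ℝ (Fin 4 → ℝ)) (-1)) = 2 := by
  have hsq : 1 < lam ^ 2 := by
    have := sq_abs lam
    nlinarith [sq_abs lam]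
  have hc2 : c ^ 2 = lam ^ 2 - 1 := by
    rw [hc]; exact Real.sq_sqrt (by linarith)
  have hcpos : 0 < c := by
    rw [hc]; exact Real.sqrt_pos.mpr (by linarith)
  -- explicit formula for φ
  have hφ : ∀ x : Fin 4 → ℝ, φ x =
      ![lam * x 1 - c * x 2, lam * x 0 - c * x 3, c * x 0 - lam * x 3, c * x 1 - lam * x 2] := by
    intro x
    have hx : x = x 0 • (Pi.single 0 1 : Fin 4 → ℝ) + x 1 • (Pi.single 1 1 : Fin 4 → ℝ)
        + x 2 • (Pi.single 2 1 : Fin 4 → ℝ) + x 3 • (Pi.single 3 1 : Fin 4 → ℝ) := by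
      funext i; fin_cases i <;> simp [Pi.single_apply]
    calc φ x = φ (x 0 • (Pi.single 0 1 : Fin 4 → ℝ) + x 1 • (Pi.single 1 1 : Fin 4 → ℝ)
        + x 2 • (Pi.single 2 1 : Fin 4 → ℝ) + x 3 • (Pi.single 3 1 : Fin 4 → ℝ)) := by rw [← hx]
    _ = _ := by
        rw [map_add, map_add, map_add, map_smul, map_smul, map_smul, map_smul,
          h1, h2, h3, h4]
        funext i; fin_cases i <;> simp [Pi.single_apply] <;> ring
  have hinv : ∀ x : Fin 4 → ℝ, φ (φ x) = x := by
    intro x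
    rw [hφ, hφ]
    funext i
    fin_cases i <;>
      simp [Matrix.cons_val_zero, Matrix.cons_val_one, Matrix.head_cons,
        Matrix.cons_val_two, Matrix.tail_cons, Matrix.cons_val_three, Fin.isValue]
    · linear_combination (-(x 0)) * hc2
    · linear_combination (-(x 1)) * hc2
    · linear_combination (-(x 2)) * hc2
    · linear_combination (-(x 3)) * hc2
  -- explicit eigenvectors
  set u1 : Fin 4 → ℝ := ![1, lam, c, 0] with hu1
  set u2 : Fin 4 → ℝ := ![lam, 1, 0, c] with hu2
  set w1 : Fin 4 → ℝ := ![1, -lam, -c, 0] with hw1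
  set w2 : Fin 4 → ℝ := ![-lam, 1, 0, -c] with hw2
  have hmem1 : ∀ v ∈ ({u1, u2} : Set (Fin 4 → ℝ)),
      v ∈ Module.End.eigenspace (φ : Module.End ℝ (Fin 4 → ℝ)) 1 := by
    rintro v (rfl | rfl) <;>
      · rw [Module.End.mem_eigenspace_iff, one_smul, hφ]
        funext i
        fin_cases i <;>
          simp [hu1, hu2, Matrix.cons_val_zero, Matrix.cons_val_one, Matrix.head_cons,
            Matrix.cons_val_two, Matrix.tail_cons, Matrix.cons_val_three] <;>
          linarith [hc2]
  have hmem2 : ∀ v ∈ ({w1, w2} : Set (Fin 4 → ℝ)),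
      v ∈ Module.End.eigenspace (φ : Module.End ℝ (Fin 4 → ℝ)) (-1) := by
    rintro v (rfl | rfl) <;>
      · rw [Module.End.mem_eigenspace_iff, hφ]
        funext i
        fin_cases i <;>
          simp [hw1, hw2, Matrix.cons_val_zero, Matrix.cons_val_one, Matrix.head_cons,
            Matrix.cons_val_two, Matrix.tail_cons, Matrix.cons_val_three,
            Pi.smul_apply, smul_eq_mul] <;>
          linarith [hc2]
  -- lower bounds on dimensions
  have hind1 : LinearIndependent ℝ ![u1, u2] := by
    rw [LinearIndependent.pair_iff]
    intro s t hst
    have h2 := congrFun hst 2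
    have h3 := congrFun hst 3
    simp only [hu1, hu2, Pi.add_apply, Pi.smul_apply, smul_eq_mul,
      Matrix.cons_val_two, Matrix.tail_cons, Matrix.head_cons,
      Matrix.cons_val_three, Pi.zero_apply] at h2 h3
    constructor
    · have : s * c = 0 := by linarith
      exact (mul_eq_zero.mp this).resolve_right hcpos.ne'
    · have : t * c = 0 := by linarith
      exact (mul_eq_zero.mp this).resolve_right hcpos.ne'
  have hind2 : LinearIndependent ℝ ![w1, w2] := by
    rw [LinearIndependent.pair_iff]
    intro s t hst
    have h2 := congrFun hst 2
    have h3 := congrFun hst 3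
    simp only [hw1, hw2, Pi.add_apply, Pi.smul_apply, smul_eq_mul,
      Matrix.cons_val_two, Matrix.tail_cons, Matrix.head_cons,
      Matrix.cons_val_three, Pi.zero_apply] at h2 h3
    constructor
    · have : s * c = 0 := by linarith
      exact (mul_eq_zero.mp this).resolve_right hcpos.ne'
    · have : t * c = 0 := by linarith
      exact (mul_eq_zero.mp this).resolve_right hcpos.ne'
  set E1 := Module.End.eigenspace (φ : Module.End ℝ (Fin 4 → ℝ)) 1 with hE1
  set E2 := Module.End.eigenspace (φ : Module.End ℝ (Fin 4 → ℝ)) (-1) with hE2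
  have hle1 : 2 ≤ Module.finrank ℝ E1 := by
    have hsp : Submodule.span ℝ (Set.range ![u1, u2]) ≤ E1 := by
      rw [Submodule.span_le]
      rintro v ⟨i, rfl⟩
      fin_cases i
      · exact hmem1 u1 (Or.inl rfl)
      · exact hmem1 u2 (Or.inr rfl)
    calc 2 = Module.finrank ℝ (Submodule.span ℝ (Set.range ![u1, u2])) := by
          rw [finrank_span_eq_card hind1]; simp
      _ ≤ Module.finrank ℝ E1 := Submodule.finrank_mono hsp
  have hle2 : 2 ≤ Module.finrank ℝ E2 := by
    have hsp : Submodule.span ℝ (Set.range ![w1, w2]) ≤ E2 := by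
      rw [Submodule.span_le]
      rintro v ⟨i, rfl⟩
      fin_cases i
      · exact hmem2 w1 (Or.inl rfl)
      · exact hmem2 w2 (Or.inr rfl)
    calc 2 = Module.finrank ℝ (Submodule.span ℝ (Set.range ![w1, w2])) := by
          rw [finrank_span_eq_card hind2]; simp
      _ ≤ Module.finrank ℝ E2 := Submodule.finrank_mono hsp
  -- the two eigenspaces are complementary
  have hdisj : E1 ⊓ E2 = ⊥ := by
    rw [Submodule.eq_bot_iff]
    rintro v ⟨hv1, hv2⟩
    have e1 : φ v = (1 : ℝ) • v := Module.End.mem_eigenspace_iff.mp hv1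
    have e2 : φ v = (-1 : ℝ) • v := Module.End.mem_eigenspace_iff.mp hv2
    have hvv : (1 : ℝ) • v = (-1 : ℝ) • v := e1 ▸ e2
    funext i
    have := congrFun hvv i
    simp only [Pi.smul_apply, smul_eq_mul, one_mul, neg_one_mul, Pi.zero_apply] at this ⊢
    linarith
  have hsup : E1 ⊔ E2 = ⊤ := by
    rw [eq_top_iff]
    intro v _
    have hv : v = (2⁻¹ : ℝ) • (v + φ v) + (2⁻¹ : ℝ) • (v - φ v) := by
      module
    rw [hv]
    apply Submodule.add_mem
    · apply Submodule.mem_sup_left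
      apply Submodule.smul_mem
      rw [hE1, Module.End.mem_eigenspace_iff, one_smul, map_add, hinv]
      abel
    · apply Submodule.mem_sup_right
      apply Submodule.smul_mem
      rw [hE2, Module.End.mem_eigenspace_iff, map_sub, hinv]
      module
  have hsum : Module.finrank ℝ E1 + Module.finrank ℝ E2 = 4 := by
    have := Submodule.finrank_sup_add_finrank_inf_eq E1 E2
    rw [hsup, hdisj] at this
    simpa [finrank_top] using this.symm
  refine ⟨hinv, ?_, by omega, by omega⟩
  intro x y
  rw [hg, hg, hφ, hφ]
  simp only [Matrix.cons_val_zero, Matrix.cons_val_one, Matrix.head_cons,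
    Matrix.cons_val_two, Matrix.tail_cons, Matrix.cons_val_three, Fin.isValue]
  linear_combination (x 0 * y 0 + x 2 * y 2 - x 1 * y 1 - x 3 * y 3) * hc2
end

section
/- Let (V, g) be ℝ⁴ with orthonormal basis (e₁,e₂,e₃,e₄) of signs (+,−,+,−), let λ, ε ∈ {±1} (with |λ| = |ε| = 1) and a₀ ∈ ℝ, and define φ by φe₁ = λe₂ + a₀(e₃+e₄), φe₂ = λe₁ − (ε/λ)a₀(e₃+e₄), φe₃ = εe₄ − a₀(e₁ + (ε/λ)e₂), φe₄ = εe₃ + a₀(e₁ + (ε/λ)e₂). Then φ² = Id and g(φX,φY) = −g(X,Y), so (g, φ) is an almost para-Hermitian structure. -/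
/-!
In coordinates `φ` is an explicit matrix, and since `λ² = ε² = 1` both `φ² = id` and
`g(φx, φy) = -g(x, y)` become polynomial identities. For an involution, `x ± φx` lies in the
`±1` eigenspace; `e₁ ± φe₁` and `e₃ ± φe₃` are independent (their `(1,3)`-minor is `1 + a₀²`),
so both eigenspaces have dimension at least two, and being disjoint inside `ℝ⁴` exactly two.
-/

open Module Module.End

section Eigenspaces

variable {K V : Type*} [Field K] [AddCommGroup V] [Module K V]

lemma add_apply_mem_eigenspace_one {f : End K V} (hf : ∀ x, f (f x) = x) (x : V) :
    x + f x ∈ eigenspace f 1 := by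
  rw [mem_eigenspace_iff, map_add, hf, one_smul, add_comm]

lemma sub_apply_mem_eigenspace_neg_one {f : End K V} (hf : ∀ x, f (f x) = x) (x : V) :
    x - f x ∈ eigenspace f (-1) := by
  rw [mem_eigenspace_iff, map_sub, hf, neg_one_smul, neg_sub]

lemma finrank_eigenspace_add_finrank_eigenspace_le [FiniteDimensional K V] (f : End K V)
    {μ ν : K} (hμν : μ ≠ ν) :
    finrank K (eigenspace f μ) + finrank K (eigenspace f ν) ≤ finrank K V :=
  Submodule.finrank_add_finrank_le_of_disjoint (f.disjoint_genEigenspace hμν 1 1)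

lemma two_le_finrank_of_linearIndependent_pair [FiniteDimensional K V] {p : Submodule K V}
    {u v : V} (huv : LinearIndependent K ![u, v]) (hu : u ∈ p) (hv : v ∈ p) :
    2 ≤ finrank K p := by
  have hspan : Submodule.span K (Set.range ![u, v]) ≤ p :=
    Submodule.span_le.2 (Set.range_subset_iff.2 (Fin.forall_fin_two.2 ⟨hu, hv⟩))
  simpa [finrank_span_eq_card huv] using Submodule.finrank_mono hspan

end Eigenspaces

lemma linearIndependent_pair_of_minor_ne_zero {ι K : Type*} [Field K] {u v : ι → K} (i j : ι)
    (h : u i * v j - u j * v i ≠ 0) : LinearIndependent K ![u, v] := by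
  rw [LinearIndependent.pair_iff]
  intro s t hst
  have hi := congrFun hst i
  have hj := congrFun hst j
  simp only [Pi.add_apply, Pi.smul_apply, smul_eq_mul, Pi.zero_apply] at hi hj
  have hs : s * (u i * v j - u j * v i) = 0 := by linear_combination v j * hi - v i * hj
  have ht : t * (u i * v j - u j * v i) = 0 := by linear_combination u i * hj - u j * hi
  exact ⟨(mul_eq_zero.1 hs).resolve_right h, (mul_eq_zero.1 ht).resolve_right h⟩

noncomputable def paraHermitianMap (lam ε a₀ : ℝ) (x : Fin 4 → ℝ) : Fin 4 → ℝ :=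
  ![lam * x 1 - a₀ * x 2 + a₀ * x 3,
    lam * x 0 - ε / lam * a₀ * x 2 + ε / lam * a₀ * x 3,
    a₀ * x 0 - ε / lam * a₀ * x 1 + ε * x 3,
    a₀ * x 0 - ε / lam * a₀ * x 1 + ε * x 2]

def neutralForm (x y : Fin 4 → ℝ) : ℝ := x 0 * y 0 - x 1 * y 1 + x 2 * y 2 - x 3 * y 3

lemma paraHermitianMap_involutive {lam ε : ℝ} (hlam : lam = 1 ∨ lam = -1)
    (hε : ε = 1 ∨ ε = -1) (a₀ : ℝ) : Function.Involutive (paraHermitianMap lam ε a₀) := by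
  intro x
  ext i
  obtain rfl | rfl := hlam <;> obtain rfl | rfl := hε <;> fin_cases i <;>
    simp [paraHermitianMap] <;> ring

lemma neutralForm_paraHermitianMap {lam ε : ℝ} (hlam : lam = 1 ∨ lam = -1)
    (hε : ε = 1 ∨ ε = -1) (a₀ : ℝ) (x y : Fin 4 → ℝ) :
    neutralForm (paraHermitianMap lam ε a₀ x) (paraHermitianMap lam ε a₀ y) =
      -neutralForm x y := by
  obtain rfl | rfl := hlam <;> obtain rfl | rfl := hε <;>
    simp [neutralForm, paraHermitianMap] <;> ring

lemma coe_eq_paraHermitianMap {lam ε a₀ : ℝ} {φ : (Fin 4 → ℝ) →ₗ[ℝ] (Fin 4 → ℝ)}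
    (h1 : φ (Pi.single 0 1 : Fin 4 → ℝ) =
      lam • (Pi.single 1 1 : Fin 4 → ℝ) +
        a₀ • ((Pi.single 2 1 : Fin 4 → ℝ) + (Pi.single 3 1 : Fin 4 → ℝ)))
    (h2 : φ (Pi.single 1 1 : Fin 4 → ℝ) =
      lam • (Pi.single 0 1 : Fin 4 → ℝ) -
        ((ε / lam) * a₀) • ((Pi.single 2 1 : Fin 4 → ℝ) + (Pi.single 3 1 : Fin 4 → ℝ)))
    (h3 : φ (Pi.single 2 1 : Fin 4 → ℝ) =
      ε • (Pi.single 3 1 : Fin 4 → ℝ) -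
        a₀ • ((Pi.single 0 1 : Fin 4 → ℝ) + (ε / lam) • (Pi.single 1 1 : Fin 4 → ℝ)))
    (h4 : φ (Pi.single 3 1 : Fin 4 → ℝ) =
      ε • (Pi.single 2 1 : Fin 4 → ℝ) +
        a₀ • ((Pi.single 0 1 : Fin 4 → ℝ) + (ε / lam) • (Pi.single 1 1 : Fin 4 → ℝ))) :
    ⇑φ = paraHermitianMap lam ε a₀ := by
  funext x
  conv_lhs => rw [pi_eq_sum_univ' x]
  simp only [Fin.sum_univ_four, map_add, map_smul, h1, h2, h3, h4]
  ext i
  fin_cases i <;> simp [paraHermitianMap] <;> ring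

/-- On `ℝ⁴` with the neutral metric (signs `(+,−,+,−)` on the standard basis),
for `λ, ε ∈ {±1}` and `a₀ ∈ ℝ`, the linear map `φ` defined by
`φe₁ = λe₂ + a₀(e₃+e₄)`, `φe₂ = λe₁ − (ε/λ)a₀(e₃+e₄)`,
`φe₃ = εe₄ − a₀(e₁ + (ε/λ)e₂)`, `φe₄ = εe₃ + a₀(e₁ + (ε/λ)e₂)` satisfies
`φ² = Id` and `g(φX,φY) = −g(X,Y)`, and its `±1` eigenspaces are 2-dimensional,
so `(g, φ)` is an almost para-Hermitian structure. -/
theorem stmt14 (lam ε : ℝ) (hlam : lam = 1 ∨ lam = -1) (hε : ε = 1 ∨ ε = -1)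
    (a₀ : ℝ)
    (g : (Fin 4 → ℝ) → (Fin 4 → ℝ) → ℝ)
    (hg : ∀ x y : Fin 4 → ℝ, g x y = x 0 * y 0 - x 1 * y 1 + x 2 * y 2 - x 3 * y 3)
    (φ : (Fin 4 → ℝ) →ₗ[ℝ] (Fin 4 → ℝ))
    (h1 : φ (Pi.single 0 1 : Fin 4 → ℝ) =
      lam • (Pi.single 1 1 : Fin 4 → ℝ) +
        a₀ • ((Pi.single 2 1 : Fin 4 → ℝ) + (Pi.single 3 1 : Fin 4 → ℝ)))
    (h2 : φ (Pi.single 1 1 : Fin 4 → ℝ) =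
      lam • (Pi.single 0 1 : Fin 4 → ℝ) -
        ((ε / lam) * a₀) • ((Pi.single 2 1 : Fin 4 → ℝ) + (Pi.single 3 1 : Fin 4 → ℝ)))
    (h3 : φ (Pi.single 2 1 : Fin 4 → ℝ) =
      ε • (Pi.single 3 1 : Fin 4 → ℝ) -
        a₀ • ((Pi.single 0 1 : Fin 4 → ℝ) + (ε / lam) • (Pi.single 1 1 : Fin 4 → ℝ)))
    (h4 : φ (Pi.single 3 1 : Fin 4 → ℝ) =
      ε • (Pi.single 2 1 : Fin 4 → ℝ) +
        a₀ • ((Pi.single 0 1 : Fin 4 → ℝ) + (ε / lam) • (Pi.single 1 1 : Fin 4 → ℝ))) :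
    (∀ x, φ (φ x) = x) ∧
    (∀ x y, g (φ x) (φ y) = - g x y) ∧
    Module.finrank ℝ (Module.End.eigenspace (φ : Module.End ℝ (Fin 4 → ℝ)) 1) = 2 ∧
    Module.finrank ℝ (Module.End.eigenspace (φ : Module.End ℝ (Fin 4 → ℝ)) (-1)) = 2 := by
  have hφ := coe_eq_paraHermitianMap h1 h2 h3 h4
  have hinv : ∀ x, φ (φ x) = x := by
    simpa only [hφ] using (paraHermitianMap_involutive hlam hε a₀ ·)
  have hg' : g = neutralForm := by ext x y; exact hg x y
  refine ⟨hinv, fun x y => ?_, ?_⟩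
  · simpa only [hg', hφ] using neutralForm_paraHermitianMap hlam hε a₀ x y
  have hminor : 1 + a₀ * a₀ ≠ 0 := (add_pos_of_pos_of_nonneg one_pos (mul_self_nonneg a₀)).ne'
  set e : Fin 4 → Fin 4 → ℝ := fun i => Pi.single i 1
  have hplus : 2 ≤ finrank ℝ (eigenspace φ 1) :=
    two_le_finrank_of_linearIndependent_pair
      (linearIndependent_pair_of_minor_ne_zero 0 2 (by simpa [e, h1, h3] using hminor))
      (add_apply_mem_eigenspace_one hinv (e 0)) (add_apply_mem_eigenspace_one hinv (e 2))
  have hminus : 2 ≤ finrank ℝ (eigenspace φ (-1)) :=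
    two_le_finrank_of_linearIndependent_pair
      (linearIndependent_pair_of_minor_ne_zero 0 2 (by simpa [e, h1, h3] using hminor))
      (sub_apply_mem_eigenspace_neg_one hinv (e 0)) (sub_apply_mem_eigenspace_neg_one hinv (e 2))
  have hsum := finrank_eigenspace_add_finrank_eigenspace_le φ (by norm_num : (1 : ℝ) ≠ -1)
  rw [finrank_fin_fun] at hsum
  omega
end
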